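/- Let B̃₀, B̃_* ∈ ℝ^{d×(k−1)} have orthonormal columns and let B_{*'} be as constructed: B_{*'} = (1/‖w̄‖²) B_* w̄ w̄ᵀ + (2 B̃₀ B̃₀ᵀ B̃_* − B̃_*) Ṽ_*ᵀ, with all orthogonality conditions as before. Then dist(B_*, B_{*'}) = 2 ‖(I_d − B̃_* B̃_*ᵀ) B̃₀ B̃₀ᵀ B̃_*‖₂ ≥ 2 dist(B̃₀, B̃_*) √(1 − dist(B̃₀, B̃_*)²). -/

import Mathlib

/-!
Writing `u = B_* w̄` and `P = ‖w̄‖⁻² u w̄ᵀ`, the orthogonality conditions make `P` orthogonal to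
every other term, so the residual `(I - B_{*'} B_{*'}ᵀ) B_*` equals `(B̃_* - C Cᵀ B̃_*) Ṽ_*ᵀ` with
`C = (2 B̃₀ B̃₀ᵀ - I) B̃_*`. Right multiplication by `Ṽ_*ᵀ` preserves the operator norm, and a Gram
matrix computation shows that this residual has twice the norm of `(I - B̃_* B̃_*ᵀ) B̃₀ B̃₀ᵀ B̃_*`.

For the inequality put `X = (I - B̃_* B̃_*ᵀ) B̃₀` and `Y = B̃₀ᵀ B̃_*`, so that `XᵀX + YYᵀ = I`. A unit
vector `x` maximising `‖X x‖` is an eigenvector of `XᵀX` with eigenvalue `s² = ‖X‖²`, hence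
`YYᵀ x = (1 - s²) x`. Testing `XY` on `Yᵀ x`, whose norm is `√(1 - s²)`, gives
`‖XY‖ √(1 - s²) ≥ (1 - s²) s`.
-/

open Matrix BigOperators

noncomputable def specNorm {m n : ℕ} (A : Matrix (Fin m) (Fin n) ℝ) : ℝ :=
  sSup {r : ℝ | ∃ v : Fin n → ℝ, ∑ i, v i ^ 2 = 1 ∧ r = Real.sqrt (∑ i, (A.mulVec v) i ^ 2)}

noncomputable def sMin {m n : ℕ} (A : Matrix (Fin m) (Fin n) ℝ) : ℝ :=
  sInf {r : ℝ | ∃ v : Fin n → ℝ, ∑ i, v i ^ 2 = 1 ∧ r = Real.sqrt (∑ i, (A.mulVec v) i ^ 2)}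

open Metric
open scoped InnerProductSpace Matrix.Norms.L2Operator

namespace ContinuousLinearMap

variable {E F G : Type*} [NormedAddCommGroup E] [InnerProductSpace ℝ E] [FiniteDimensional ℝ E]
  [NormedAddCommGroup F] [InnerProductSpace ℝ F] [CompleteSpace F]

theorem exists_norm_eq_one_norm_apply_eq_adjoint_comp_self_apply_eq [Nontrivial E]
    (f : E →L[ℝ] F) :
    ∃ x : E, ‖x‖ = 1 ∧ ‖f x‖ = ‖f‖ ∧ (adjoint f ∘L f) x = ‖f‖ ^ 2 • x := by
  obtain ⟨x, hx, hmax⟩ := (isCompact_sphere (0 : E) 1).exists_isMaxOn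
    (NormedSpace.sphere_nonempty.mpr zero_le_one) (map_continuous f).norm.continuousOn
  have hx : ‖x‖ = 1 := by simpa using hx
  have hfx : ‖f x‖ = ‖f‖ := le_antisymm (by simpa [hx] using f.le_opNorm x)
    (opNorm_le_of_unit_norm (norm_nonneg _) fun y hy ↦ hmax (by simpa using hy))
  have hT : IsSelfAdjoint (adjoint f ∘L f) := by
    rw [isSelfAdjoint_iff', adjoint_comp, adjoint_adjoint]
  -- `reApplyInnerSelf (f† f) = ‖f ·‖²`, so `x` is a maximum of the Rayleigh quotient.
  have hextr : IsMaxOn (adjoint f ∘L f).reApplyInnerSelf (sphere 0 ‖x‖) x := by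
    intro y hy
    simp only [Set.mem_ofPred_eq, reApplyInnerSelf_apply, ← apply_norm_sq_eq_inner_adjoint_left]
    rw [hx] at hy
    gcongr
    exact hmax hy
  refine ⟨x, hx, hfx, ?_⟩
  rw [hT.eq_smul_self_of_isLocalExtrOn (Or.inr hextr.localize), rayleighQuotient,
    reApplyInnerSelf_apply, ← apply_norm_sq_eq_inner_adjoint_left, hfx, hx]
  simp

theorem norm_mul_sqrt_one_sub_sq_le_norm_comp [NormedAddCommGroup G] [InnerProductSpace ℝ G]
    [CompleteSpace G] (f : E →L[ℝ] F) (g : G →L[ℝ] E)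
    (h : adjoint f ∘L f + g ∘L adjoint g = ContinuousLinearMap.id ℝ E) :
    ‖f‖ * √(1 - ‖f‖ ^ 2) ≤ ‖f ∘L g‖ := by
  cases subsingleton_or_nontrivial E
  · simp [Subsingleton.elim f 0]
  obtain ⟨x, hx, hfx, hffx⟩ := f.exists_norm_eq_one_norm_apply_eq_adjoint_comp_self_apply_eq
  set s := ‖f‖
  have hggx : g (adjoint g x) = (1 - s ^ 2) • x := by
    have := congr($h x)
    simp only [_root_.add_apply, comp_apply, hffx, coe_id', id_eq] at this
    rw [sub_smul, one_smul]
    exact eq_sub_of_add_eq' this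
  set t := ‖adjoint g x‖
  have ht : t ^ 2 = 1 - s ^ 2 := by
    rw [apply_norm_sq_eq_inner_adjoint_left, adjoint_adjoint, comp_apply, hggx,
      real_inner_smul_left, real_inner_self_eq_norm_sq, hx]
    simp
  have key : t * (t * s) ≤ t * ‖f ∘L g‖ := by
    have := (f ∘L g).le_opNorm (adjoint g x)
    rwa [comp_apply, hggx, map_smul, norm_smul, ← ht, Real.norm_of_nonneg (by positivity), hfx,
      sq, mul_assoc, mul_comm ‖f ∘L g‖] at this
  rw [← ht, Real.sqrt_sq (norm_nonneg _)]
  rcases (norm_nonneg (adjoint g x)).eq_or_lt with h0 | hpos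
  · simp [← h0]
  · rw [mul_comm]
    exact le_of_mul_le_mul_left key hpos

end ContinuousLinearMap

namespace Matrix

variable {R : Type*} {l m n : Type*}

section Algebra

theorem vecMulVec_mul_eq_zero [CommRing R] [Fintype m] {x : l → R} {y : m → R}
    {M : Matrix m n R} (h : Mᵀ *ᵥ y = 0) : vecMulVec x y * M = 0 := by
  ext i j
  simp [vecMulVec_mul, ← mulVec_transpose, h, vecMulVec_apply]

theorem dotProduct_mulVec_self_of_transpose_mul_self_eq_one [CommRing R] [Fintype m] [Fintype n]
    [DecidableEq n] {B : Matrix m n R} (hB : Bᵀ * B = 1) (w : n → R) :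
    (B *ᵥ w) ⬝ᵥ (B *ᵥ w) = w ⬝ᵥ w := by
  rw [dotProduct_mulVec, ← vecMul_transpose, vecMul_vecMul, hB, vecMul_one]

theorem smul_vecMulVec_mul_transpose_mul_self [Field R] [Fintype m] [Fintype n] {u : m → R}
    {w : n → R} {s : R} (hu : u ⬝ᵥ u = s) (hw : w ⬝ᵥ w = s) :
    (s⁻¹ • vecMulVec u w) * (s⁻¹ • vecMulVec u w)ᵀ * (s⁻¹ • vecMulVec u w) =
      s⁻¹ • vecMulVec u w := by
  simp only [transpose_smul, transpose_vecMulVec, Matrix.smul_mul, Matrix.mul_smul,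
    vecMulVec_mul_vecMulVec, hu, hw, smul_smul, vecMulVec_smul]
  congr 1
  rcases eq_or_ne s 0 with rfl | hs
  · simp
  · field_simp

variable [CommRing R] {d k r : Type*} [Fintype d] [Fintype r] [DecidableEq d] [DecidableEq r]

theorem one_sub_mul_transpose_mul_eq [Fintype k] {P : Matrix d k R} {B C : Matrix d r R}
    {V : Matrix k r R} (hV : Vᵀ * V = 1) (hPV : P * V = 0) (hPB : Pᵀ * B = 0) (hPC : Pᵀ * C = 0)
    (hP : P * Pᵀ * P = P) :
    (1 - (P + C * Vᵀ) * (P + C * Vᵀ)ᵀ) * (P + B * Vᵀ) = (B - C * (Cᵀ * B)) * Vᵀ := by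
  have hVP : Vᵀ * Pᵀ = 0 := by rw [← transpose_mul, hPV, transpose_zero]
  have hCP : Cᵀ * P = 0 := by rw [← transpose_transpose P, ← transpose_mul, hPC, transpose_zero]
  have hPBV : Pᵀ * (B * Vᵀ) = 0 := by rw [← Matrix.mul_assoc, hPB, Matrix.zero_mul]
  have hgram : (P + C * Vᵀ) * (P + C * Vᵀ)ᵀ = P * Pᵀ + C * Cᵀ := by
    simp only [transpose_add, transpose_mul, transpose_transpose, Matrix.add_mul, Matrix.mul_add,
      Matrix.mul_assoc, ← Matrix.mul_assoc Vᵀ V, hV, Matrix.one_mul, hVP, ← Matrix.mul_assoc P V,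
      hPV, Matrix.zero_mul, Matrix.mul_zero, add_zero, zero_add]
  rw [hgram]
  simp only [Matrix.sub_mul, Matrix.add_mul, Matrix.mul_add, Matrix.one_mul, Matrix.mul_assoc, hPBV,
    hCP, Matrix.mul_zero, hP]
  abel

theorem transpose_mul_self_sub_reflection_mul_eq {B₀ B C : Matrix d r R}
    (hB₀ : B₀ᵀ * B₀ = 1) (hB : Bᵀ * B = 1) (hC : C = (2 : R) • (B₀ * B₀ᵀ * B) - B) :
    (B - C * (Cᵀ * B))ᵀ * (B - C * (Cᵀ * B)) =
      (2 : R) ^ 2 • (((1 - B * Bᵀ) * (B₀ * (B₀ᵀ * B)))ᵀ * ((1 - B * Bᵀ) * (B₀ * (B₀ᵀ * B)))) := by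
  have hB₀X : ∀ X : Matrix r r R, B₀ᵀ * (B₀ * X) = X := by
    intro X; rw [← Matrix.mul_assoc, hB₀, Matrix.one_mul]
  have hBX : ∀ X : Matrix r r R, Bᵀ * (B * X) = X := by
    intro X; rw [← Matrix.mul_assoc, hB, Matrix.one_mul]
  subst hC
  simp only [transpose_sub, transpose_mul, transpose_smul, transpose_transpose, Matrix.sub_mul,
    Matrix.mul_sub, Matrix.smul_mul, Matrix.mul_smul, Matrix.mul_one, Matrix.one_mul,
    Matrix.mul_assoc, hB₀X, hBX, hB, smul_smul, smul_sub]
  module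

theorem transpose_mul_self_add_mul_transpose_eq_one {B₀ B : Matrix d r R} (hB₀ : B₀ᵀ * B₀ = 1)
    (hB : Bᵀ * B = 1) :
    ((1 - B * Bᵀ) * B₀)ᵀ * ((1 - B * Bᵀ) * B₀) + (B₀ᵀ * B) * (B₀ᵀ * B)ᵀ = 1 := by
  have hBX : ∀ X : Matrix r r R, Bᵀ * (B * X) = X := by
    intro X; rw [← Matrix.mul_assoc, hB, Matrix.one_mul]
  simp only [transpose_sub, transpose_mul, transpose_transpose, Matrix.sub_mul, Matrix.mul_sub,
    Matrix.one_mul, Matrix.mul_assoc, hBX, hB₀]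
  abel

end Algebra

section L2OpNorm

variable [Fintype l] [Fintype m] [Fintype n]

noncomputable def toL2OpCLM [DecidableEq n] :
    Matrix m n ℝ ≃ₗ[ℝ] (EuclideanSpace ℝ n →L[ℝ] EuclideanSpace ℝ m) :=
  toEuclideanLin.trans LinearMap.toContinuousLinearMap

theorem l2_opNorm_eq_norm_toL2OpCLM [DecidableEq n] (A : Matrix m n ℝ) :
    ‖A‖ = ‖toL2OpCLM A‖ := rfl

theorem toL2OpCLM_apply [DecidableEq n] (A : Matrix m n ℝ) (x : EuclideanSpace ℝ n) :
    toL2OpCLM A x = WithLp.toLp 2 (A *ᵥ x.ofLp) := rfl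

theorem toL2OpCLM_mul [DecidableEq m] [DecidableEq n] (A : Matrix l m ℝ) (B : Matrix m n ℝ) :
    toL2OpCLM (A * B) = toL2OpCLM A ∘L toL2OpCLM B := by
  ext1 x
  simp [toL2OpCLM_apply, mulVec_mulVec]

theorem toL2OpCLM_transpose [DecidableEq m] [DecidableEq n] (A : Matrix m n ℝ) :
    toL2OpCLM Aᵀ = ContinuousLinearMap.adjoint (toL2OpCLM A) := by
  rw [← conjTranspose_eq_transpose_of_trivial, toL2OpCLM, LinearEquiv.trans_apply,
    toEuclideanLin_conjTranspose_eq_adjoint]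
  exact LinearMap.adjoint_toContinuousLinearMap _

theorem toL2OpCLM_one [DecidableEq n] :
    toL2OpCLM (1 : Matrix n n ℝ) = ContinuousLinearMap.id ℝ _ := by
  ext1 x
  simp [toL2OpCLM_apply]

theorem l2_opNorm_sq_eq_transpose_mul_self [DecidableEq n] (A : Matrix m n ℝ) :
    ‖A‖ ^ 2 = ‖Aᵀ * A‖ := by
  rw [sq, ← l2_opNorm_conjTranspose_mul_self, conjTranspose_eq_transpose_of_trivial]

theorem l2_opNorm_le_one_of_transpose_mul_self_eq_one [DecidableEq n] {V : Matrix m n ℝ}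
    (hV : Vᵀ * V = 1) : ‖V‖ ≤ 1 := by
  have h : ‖V‖ ^ 2 ≤ 1 := by
    rw [l2_opNorm_sq_eq_transpose_mul_self, hV, l2_opNorm_eq_norm_toL2OpCLM, toL2OpCLM_one]
    exact ContinuousLinearMap.norm_id_le
  nlinarith [norm_nonneg V]

theorem l2_opNorm_mul_transpose_eq [DecidableEq m] [DecidableEq n] (A : Matrix l n ℝ)
    {V : Matrix m n ℝ} (hV : Vᵀ * V = 1) : ‖A * Vᵀ‖ = ‖A‖ := by
  have hV1 := l2_opNorm_le_one_of_transpose_mul_self_eq_one hV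
  have hVt : ‖Vᵀ‖ = ‖V‖ := by
    rw [← conjTranspose_eq_transpose_of_trivial, l2_opNorm_conjTranspose]
  apply le_antisymm
  · calc ‖A * Vᵀ‖ ≤ ‖A‖ * ‖Vᵀ‖ := l2_opNorm_mul _ _
      _ ≤ ‖A‖ := by rw [hVt]; exact mul_le_of_le_one_right (norm_nonneg _) hV1
  · calc ‖A‖ = ‖A * Vᵀ * V‖ := by rw [Matrix.mul_assoc, hV, Matrix.mul_one]
      _ ≤ ‖A * Vᵀ‖ * ‖V‖ := l2_opNorm_mul _ _
      _ ≤ ‖A * Vᵀ‖ := mul_le_of_le_one_right (norm_nonneg _) hV1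

theorem l2_opNorm_eq_abs_mul_of_transpose_mul_self_eq [DecidableEq n] {A : Matrix l n ℝ}
    {B : Matrix m n ℝ} {c : ℝ} (h : Aᵀ * A = c ^ 2 • (Bᵀ * B)) : ‖A‖ = |c| * ‖B‖ := by
  have hsq : ‖A‖ ^ 2 = (|c| * ‖B‖) ^ 2 := by
    rw [l2_opNorm_sq_eq_transpose_mul_self, h, norm_smul, ← l2_opNorm_sq_eq_transpose_mul_self,
      mul_pow, sq_abs, Real.norm_of_nonneg (sq_nonneg c)]
  exact (pow_left_inj₀ (norm_nonneg _) (by positivity) two_ne_zero).mp hsq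

theorem l2_opNorm_mul_sqrt_one_sub_sq_le [DecidableEq l] [DecidableEq n] (X : Matrix m n ℝ)
    (Y : Matrix n l ℝ) (h : Xᵀ * X + Y * Yᵀ = 1) : ‖X‖ * √(1 - ‖X‖ ^ 2) ≤ ‖X * Y‖ := by
  classical
  rw [l2_opNorm_eq_norm_toL2OpCLM, l2_opNorm_eq_norm_toL2OpCLM, toL2OpCLM_mul]
  refine (toL2OpCLM X).norm_mul_sqrt_one_sub_sq_le_norm_comp _ ?_
  rw [← toL2OpCLM_transpose, ← toL2OpCLM_transpose, ← toL2OpCLM_mul, ← toL2OpCLM_mul, ← map_add,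
    h, toL2OpCLM_one]

end L2OpNorm

end Matrix

theorem specNorm_eq_l2_opNorm {m n : ℕ} (A : Matrix (Fin m) (Fin n) ℝ) : specNorm A = ‖A‖ := by
  rw [l2_opNorm_eq_norm_toL2OpCLM, ← ContinuousLinearMap.sSup_sphere_eq_norm, specNorm]
  congr 1
  ext r
  simp only [Set.mem_ofPred_eq, Set.mem_image, mem_sphere_zero_iff_norm, toL2OpCLM_apply,
    EuclideanSpace.norm_eq, Real.norm_eq_abs, sq_abs, Real.sqrt_eq_one]
  constructor
  · rintro ⟨v, hv, rfl⟩
    exact ⟨WithLp.toLp 2 v, hv, rfl⟩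
  · rintro ⟨x, hx, rfl⟩
    exact ⟨x.ofLp, hx, rfl⟩

theorem stmt13_general {d k : ℕ}
    (Bstar : Matrix (Fin d) (Fin k) ℝ) (hBstar : Bstarᵀ * Bstar = 1)
    (wbar : Fin k → ℝ)
    (Bt0 Bts : Matrix (Fin d) (Fin (k - 1)) ℝ) (Vts : Matrix (Fin k) (Fin (k - 1)) ℝ)
    (hBts : Btsᵀ * Bts = 1) (hBtsw : Btsᵀ.mulVec (Bstar.mulVec wbar) = 0)
    (hVts : Vtsᵀ * Vts = 1) (hVtsw : Vtsᵀ.mulVec wbar = 0)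
    (hBt0 : Bt0ᵀ * Bt0 = 1) (hBt0w : Bt0ᵀ.mulVec (Bstar.mulVec wbar) = 0)
    (hdecomp : Bstar = (∑ i, wbar i ^ 2)⁻¹ • vecMulVec (Bstar.mulVec wbar) wbar + Bts * Vtsᵀ)
    (Bsp : Matrix (Fin d) (Fin k) ℝ)
    (hBsp : Bsp = (∑ i, wbar i ^ 2)⁻¹ • vecMulVec (Bstar.mulVec wbar) wbar
        + ((2 : ℝ) • (Bt0 * Bt0ᵀ * Bts) - Bts) * Vtsᵀ) :
    specNorm ((1 - Bsp * Bspᵀ) * Bstar)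
        = 2 * specNorm ((1 - Bts * Btsᵀ) * (Bt0 * (Bt0ᵀ * Bts))) ∧
    2 * specNorm ((1 - Bts * Btsᵀ) * (Bt0 * (Bt0ᵀ * Bts)))
        ≥ 2 * specNorm ((1 - Bts * Btsᵀ) * Bt0) *
            Real.sqrt (1 - specNorm ((1 - Bts * Btsᵀ) * Bt0) ^ 2) := by
  simp only [specNorm_eq_l2_opNorm]
  refine ⟨?_, ?_⟩
  · set s := ∑ i, wbar i ^ 2
    set u := Bstar *ᵥ wbar
    set C := (2 : ℝ) • (Bt0 * Bt0ᵀ * Bts) - Bts with hC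
    have hww : wbar ⬝ᵥ wbar = s := by simp [s, dotProduct, sq]
    have hu : u ⬝ᵥ u = s := by rw [dotProduct_mulVec_self_of_transpose_mul_self_eq_one hBstar, hww]
    have hCu : Cᵀ *ᵥ u = 0 := by
      rw [hC, transpose_sub, sub_mulVec, hBtsw, transpose_smul, smul_mulVec, transpose_mul,
        transpose_mul, transpose_transpose, ← mulVec_mulVec, ← mulVec_mulVec, hBt0w]
      simp
    have hres : (1 - Bsp * Bspᵀ) * Bstar = (Bts - C * (Cᵀ * Bts)) * Vtsᵀ := by
      -- `Bstar` inside the rank-one term is hidden in `u`, so only the right factor is rewritten.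
      rw [hBsp, hdecomp]
      refine one_sub_mul_transpose_mul_eq hVts ?_ ?_ ?_
        (smul_vecMulVec_mul_transpose_mul_self hu hww)
      all_goals simp [Matrix.smul_mul, vecMulVec_mul_eq_zero, hVtsw, hBtsw, hCu]
    rw [hres, l2_opNorm_mul_transpose_eq _ hVts,
      l2_opNorm_eq_abs_mul_of_transpose_mul_self_eq
        (transpose_mul_self_sub_reflection_mul_eq hBt0 hBts hC), abs_two]
  · have h := l2_opNorm_mul_sqrt_one_sub_sq_le _ _
      (transpose_mul_self_add_mul_transpose_eq_one hBt0 hBts)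
    rw [Matrix.mul_assoc] at h
    linarith

theorem stmt13 {d k : ℕ} (hk : 0 < k)
    (Bstar : Matrix (Fin d) (Fin k) ℝ) (hBstar : Bstarᵀ * Bstar = 1)
    (wbar : Fin k → ℝ) (hw : wbar ≠ 0)
    (Bt0 Bts : Matrix (Fin d) (Fin (k - 1)) ℝ) (Vts : Matrix (Fin k) (Fin (k - 1)) ℝ)
    (hBts : Btsᵀ * Bts = 1) (hBtsw : Btsᵀ.mulVec (Bstar.mulVec wbar) = 0)
    (hVts : Vtsᵀ * Vts = 1) (hVtsw : Vtsᵀ.mulVec wbar = 0)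
    (hBt0 : Bt0ᵀ * Bt0 = 1) (hBt0w : Bt0ᵀ.mulVec (Bstar.mulVec wbar) = 0)
    (hdecomp : Bstar = (∑ i, wbar i ^ 2)⁻¹ • vecMulVec (Bstar.mulVec wbar) wbar + Bts * Vtsᵀ)
    (Bsp : Matrix (Fin d) (Fin k) ℝ)
    (hBsp : Bsp = (∑ i, wbar i ^ 2)⁻¹ • vecMulVec (Bstar.mulVec wbar) wbar
        + ((2 : ℝ) • (Bt0 * Bt0ᵀ * Bts) - Bts) * Vtsᵀ) :
    specNorm ((1 - Bsp * Bspᵀ) * Bstar)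
        = 2 * specNorm ((1 - Bts * Btsᵀ) * (Bt0 * (Bt0ᵀ * Bts))) ∧
    2 * specNorm ((1 - Bts * Btsᵀ) * (Bt0 * (Bt0ᵀ * Bts)))
        ≥ 2 * specNorm ((1 - Bts * Btsᵀ) * Bt0) *
            Real.sqrt (1 - specNorm ((1 - Bts * Btsᵀ) * Bt0) ^ 2) :=
  stmt13_general Bstar hBstar wbar Bt0 Bts Vts hBts hBtsw hVts hVtsw hBt0 hBt0w hdecomp Bsp hBsp
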